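/- Partial monotonicity of the state-action cost function in the nonuniform case (Lemma 6 of the paper): let V : 𝒬 → ℝ be ⊵-monotone. Then for all Q ∈ 𝒬, all u, v ∈ Fin M with v ≠ u, and all user indices k ∈ Fin K such that Q u k < N u k and Q + E_{u,k} ⊵ Q (equivalently, there exists j ≥ k with Q u j > 0), one has J_V(Q + E_{u,k}, u) − J_V(Q + E_{u,k}, v) ≤ J_V(Q, u) − J_V(Q, v), where Q + E_{u,k} denotes the state with entry (u,k) increased by 1. -/

import Mathlib

/-!
Adding a request `E_{u,k}` raises the queue total by one under either action. Under `u` the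
added request is served at once, so the successor states are unchanged, and the power cost is
unchanged because a pending request of some user `j ≥ k` already forces a power level at least
`p u k`. Under `v ≠ u` the power cost is also unchanged, while the transition preserves `⊵`, so
the expected future cost can only grow.
-/

open Finset

/-- State space of the nonuniform-channel multicast MDP: request queue matrices capped
by `N`. -/
def QS (M K : ℕ) (N : Fin M → Fin K → ℕ) : Type :=
  {Q : Fin M → Fin K → ℕ // ∀ m k, Q m k ≤ N m k}

/-- Next state when content `u` is multicast in state `Q` and arrival `a` occurs. -/
def nextQ {M K : ℕ} {N : Fin M → Fin K → ℕ} (Q : QS M K N) (u : Fin M)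
    (a : Fin M → Fin K → ℕ) : QS M K N :=
  ⟨fun m k => min ((if m = u then 0 else Q.1 m k) + a m k) (N m k),
    fun _ _ => min_le_right _ _⟩

/-- Power cost of multicasting with per-user power levels `pu` to the users with pending
requests in `q`: the maximum of `pu` over `{k : q k > 0}`, and `0` if this set is empty. -/
noncomputable def PCost {K : ℕ} (pu : Fin K → ℝ) (q : Fin K → ℕ) : ℝ :=
  if h : (Finset.univ.filter fun k => 0 < q k).Nonempty then
    (Finset.univ.filter fun k => 0 < q k).sup' h pu
  else 0

/-- Per-stage cost in the nonuniform case. -/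
noncomputable def gCost {M K : ℕ} {N : Fin M → Fin K → ℕ} (wp wf : ℝ)
    (p : Fin M → Fin K → ℝ) (f : Fin M → ℝ) (Q : QS M K N) (u : Fin M) : ℝ :=
  (∑ m, ∑ k, (Q.1 m k : ℝ)) + wp * PCost (p u) (Q.1 u) + wf * f u

/-- State-action cost function `J_V(Q,u)` in the nonuniform case. -/
noncomputable def JCost {M K : ℕ} {N : Fin M → Fin K → ℕ}
    (𝒜 : Finset (Fin M → Fin K → ℕ)) (ρ : (Fin M → Fin K → ℕ) → ℝ)
    (wp wf : ℝ) (p : Fin M → Fin K → ℝ) (f : Fin M → ℝ)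
    (V : QS M K N → ℝ) (Q : QS M K N) (u : Fin M) : ℝ :=
  gCost wp wf p f Q u + ∑ a ∈ 𝒜, ρ a * V (nextQ Q u a)

/-- The partial order `q² ⊵ q¹` on per-content request queue vectors. -/
def TriVec {K : ℕ} (q₂ q₁ : Fin K → ℕ) : Prop :=
  ∀ k : Fin K,
    ((∃ j, k ≤ j ∧ 0 < q₁ j) → q₁ k ≤ q₂ k) ∧
    ((¬ ∃ j, k ≤ j ∧ 0 < q₁ j) → q₂ k = q₁ k)

/-- The partial order `Q² ⊵ Q¹` on states: `Q² m ⊵ Q¹ m` for every content `m`. -/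
def TriState {M K : ℕ} {N : Fin M → Fin K → ℕ} (Q₂ Q₁ : QS M K N) : Prop :=
  ∀ m, TriVec (Q₂.1 m) (Q₁.1 m)

/-- The state `Q + E_{u,k}`: entry `(u,k)` is increased by 1 (requires `Q u k < N u k`). -/
def addE {M K : ℕ} {N : Fin M → Fin K → ℕ} (Q : QS M K N) (u : Fin M) (k : Fin K)
    (h : Q.1 u k < N u k) : QS M K N :=
  ⟨Function.update Q.1 u (Function.update (Q.1 u) k (Q.1 u k + 1)), by
    intro m i
    rcases eq_or_ne m u with rfl | hm
    · simp only [Function.update_self]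
      rcases eq_or_ne i k with rfl | hi
      · simp only [Function.update_self]; exact h
      · simp only [Function.update_of_ne hi]; exact Q.2 m i
    · simp only [Function.update_of_ne hm]; exact Q.2 m i⟩

theorem TriVec.refl {K : ℕ} (q : Fin K → ℕ) : TriVec q q :=
  fun _ => ⟨fun _ => le_rfl, fun _ => rfl⟩

theorem TriVec.exists_pos_of_ne {K : ℕ} {q₂ q₁ : Fin K → ℕ} (hq : TriVec q₂ q₁) {k : Fin K}
    (hk : q₂ k ≠ q₁ k) : ∃ j, k ≤ j ∧ 0 < q₁ j := by
  by_contra hnone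
  exact hk ((hq k).2 hnone)

theorem TriVec.le {K : ℕ} {q₂ q₁ : Fin K → ℕ} (hq : TriVec q₂ q₁) (k : Fin K) : q₁ k ≤ q₂ k := by
  by_cases hk : ∃ j, k ≤ j ∧ 0 < q₁ j
  · exact (hq k).1 hk
  · exact ((hq k).2 hk).ge

theorem TriVec.min_add {K : ℕ} {q₂ q₁ a n : Fin K → ℕ} (hq₁ : ∀ i, q₁ i ≤ n i)
    (hq : TriVec q₂ q₁) :
    TriVec (fun i => min (q₂ i + a i) (n i)) (fun i => min (q₁ i + a i) (n i)) := by
  refine fun k => ⟨fun _ => min_le_min_right _ (Nat.add_le_add_right (hq.le k) _), fun hnone => ?_⟩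
  -- the cap `q₁ ≤ n` keeps a positive entry of `q₁` positive after truncation
  have hold : ¬ ∃ j, k ≤ j ∧ 0 < q₁ j := fun ⟨j, hkj, hj⟩ =>
    hnone ⟨j, hkj, lt_min (by omega) (hj.trans_le (hq₁ j))⟩
  simp only [(hq k).2 hold]

section State

variable {M K : ℕ} {N : Fin M → Fin K → ℕ}

theorem TriState.nextQ {Q₂ Q₁ : QS M K N} (hQ : TriState Q₂ Q₁) (v : Fin M)
    (a : Fin M → Fin K → ℕ) : TriState (nextQ Q₂ v a) (nextQ Q₁ v a) := by
  intro m
  by_cases hm : m = v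
  · simp only [_root_.nextQ, hm, if_true]
    exact TriVec.refl _
  · simp only [_root_.nextQ, hm, if_false]
    exact (hQ m).min_add (Q₁.2 m)

theorem nextQ_congr {Q₁ Q₂ : QS M K N} {u : Fin M} (h : ∀ m, m ≠ u → Q₁.1 m = Q₂.1 m)
    (a : Fin M → Fin K → ℕ) : nextQ Q₁ u a = nextQ Q₂ u a := by
  refine Subtype.ext (funext fun m => ?_)
  by_cases hm : m = u
  · simp only [nextQ, hm, if_true]
  · simp only [nextQ, hm, if_false, h m hm]

theorem addE_apply_self (Q : QS M K N) (u : Fin M) (k : Fin K) (h : Q.1 u k < N u k) :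
    (addE Q u k h).1 u = Function.update (Q.1 u) k (Q.1 u k + 1) :=
  Function.update_self _ _ _

theorem addE_apply_of_ne (Q : QS M K N) {u m : Fin M} (hm : m ≠ u) (k : Fin K)
    (h : Q.1 u k < N u k) : (addE Q u k h).1 m = Q.1 m :=
  Function.update_of_ne hm _ _

theorem addE_val (Q : QS M K N) (u : Fin M) (k : Fin K) (h : Q.1 u k < N u k) :
    (addE Q u k h).1 = Q.1 + Pi.single u (Pi.single k 1) := by
  funext m i
  by_cases hm : m = u
  · subst hm
    by_cases hi : i = k
    · subst hi; simp [addE_apply_self]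
    · simp [addE_apply_self, hi]
  · simp [addE_apply_of_ne Q hm, hm]

theorem sum_addE (Q : QS M K N) (u : Fin M) (k : Fin K) (h : Q.1 u k < N u k) :
    ∑ m, ∑ i, ((addE Q u k h).1 m i : ℝ) = ∑ m, ∑ i, (Q.1 m i : ℝ) + 1 := by
  simp only [addE_val, Pi.add_apply, Nat.cast_add, sum_add_distrib, add_right_inj]
  rw [Fintype.sum_eq_single u fun m hm => by simp [hm],
    Fintype.sum_eq_single k fun i hi => by simp [hi]]
  simp

end State

theorem filter_pos_update_succ {K : ℕ} (q : Fin K → ℕ) (k : Fin K) :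
    univ.filter (fun i => 0 < Function.update q k (q k + 1) i)
      = insert k (univ.filter fun i => 0 < q i) := by
  ext i
  by_cases hi : i = k
  · subst hi; simp
  · simp [hi]

theorem PCost_update_succ {K : ℕ} {pu : Fin K → ℝ} (hpu : Monotone pu) {q : Fin K → ℕ}
    {j k : Fin K} (hkj : k ≤ j) (hj : 0 < q j) :
    PCost pu (Function.update q k (q k + 1)) = PCost pu q := by
  have hjmem : j ∈ univ.filter fun i => 0 < q i := by simp [hj]
  have hne : (univ.filter fun i => 0 < q i).Nonempty := ⟨j, hjmem⟩
  have hne' : (univ.filter fun i => 0 < Function.update q k (q k + 1) i).Nonempty := by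
    rw [filter_pos_update_succ]; exact insert_nonempty _ _
  rw [PCost, PCost, dif_pos hne, dif_pos hne',
    sup'_congr hne' (filter_pos_update_succ q k) fun _ _ => rfl, sup'_insert]
  exact sup_eq_right.mpr ((hpu hkj).trans (le_sup' pu hjmem))

section Cost

variable {M K : ℕ} {N : Fin M → Fin K → ℕ} (𝒜 : Finset (Fin M → Fin K → ℕ))
  (ρ : (Fin M → Fin K → ℕ) → ℝ) (wp wf : ℝ) (p : Fin M → Fin K → ℝ) (f : Fin M → ℝ)
  (V : QS M K N → ℝ)

theorem sum_V_nextQ_le_of_triState (hρ0 : ∀ a ∈ 𝒜, 0 ≤ ρ a)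
    (hV : ∀ Q₁ Q₂ : QS M K N, TriState Q₂ Q₁ → V Q₁ ≤ V Q₂) {Q₂ Q₁ : QS M K N}
    (hQ : TriState Q₂ Q₁) (v : Fin M) :
    ∑ a ∈ 𝒜, ρ a * V (nextQ Q₁ v a) ≤ ∑ a ∈ 𝒜, ρ a * V (nextQ Q₂ v a) :=
  sum_le_sum fun a ha => mul_le_mul_of_nonneg_left (hV _ _ (hQ.nextQ v a)) (hρ0 a ha)

theorem JCost_addE_self (Q : QS M K N) (u : Fin M) (hpu : Monotone (p u)) {j k : Fin K}
    (hkj : k ≤ j) (hj : 0 < Q.1 u j) (h : Q.1 u k < N u k) :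
    JCost 𝒜 ρ wp wf p f V (addE Q u k h) u = JCost 𝒜 ρ wp wf p f V Q u + 1 := by
  have hnext : ∀ a, nextQ (addE Q u k h) u a = nextQ Q u a :=
    nextQ_congr fun _ hm => addE_apply_of_ne Q hm k h
  simp only [JCost, gCost, hnext, sum_addE, addE_apply_self, PCost_update_succ hpu hkj hj]
  ring

theorem JCost_addE_of_ne (hρ0 : ∀ a ∈ 𝒜, 0 ≤ ρ a)
    (hV : ∀ Q₁ Q₂ : QS M K N, TriState Q₂ Q₁ → V Q₁ ≤ V Q₂) (Q : QS M K N) {u v : Fin M}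
    (hvu : v ≠ u) (k : Fin K) (h : Q.1 u k < N u k) (hT : TriState (addE Q u k h) Q) :
    JCost 𝒜 ρ wp wf p f V Q v + 1 ≤ JCost 𝒜 ρ wp wf p f V (addE Q u k h) v := by
  have hfuture := sum_V_nextQ_le_of_triState 𝒜 ρ V hρ0 hV hT v
  simp only [JCost, gCost, sum_addE, addE_apply_of_ne Q hvu]
  linarith

end Cost

theorem J_partial_monotone_general
    {M K : ℕ} (N : Fin M → Fin K → ℕ)
    (𝒜 : Finset (Fin M → Fin K → ℕ)) (ρ : (Fin M → Fin K → ℕ) → ℝ)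
    (hρ0 : ∀ a ∈ 𝒜, 0 ≤ ρ a)
    (wp wf : ℝ) (p : Fin M → Fin K → ℝ) (f : Fin M → ℝ)
    (hpmono : ∀ m, Monotone (p m))
    (V : QS M K N → ℝ)
    (hV : ∀ Q₁ Q₂ : QS M K N, TriState Q₂ Q₁ → V Q₁ ≤ V Q₂) :
    ∀ (Q : QS M K N) (u v : Fin M), v ≠ u → ∀ (k : Fin K) (h : Q.1 u k < N u k),
      TriState (addE Q u k h) Q →
      JCost 𝒜 ρ wp wf p f V (addE Q u k h) u - JCost 𝒜 ρ wp wf p f V (addE Q u k h) v ≤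
        JCost 𝒜 ρ wp wf p f V Q u - JCost 𝒜 ρ wp wf p f V Q v := by
  intro Q u v hvu k h hT
  obtain ⟨j, hkj, hj⟩ := (hT u).exists_pos_of_ne (k := k) (by simp [addE_apply_self])
  have hu := JCost_addE_self 𝒜 ρ wp wf p f V Q u (hpmono u) hkj hj h
  have hv := JCost_addE_of_ne 𝒜 ρ wp wf p f V hρ0 hV Q hvu k h hT
  linarith

/-- Partial monotonicity of the state-action cost function in the nonuniform case
(Lemma 6): for a `⊵`-monotone value function `V`, whenever `Q + E_{u,k} ⊵ Q`,
`J_V(Q+E_{u,k},u) - J_V(Q+E_{u,k},v) ≤ J_V(Q,u) - J_V(Q,v)` for every `v ≠ u`. -/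
theorem J_partial_monotone
    {M K : ℕ} (hM : 1 ≤ M) (hK : 1 ≤ K) (N : Fin M → Fin K → ℕ)
    (𝒜 : Finset (Fin M → Fin K → ℕ)) (ρ : (Fin M → Fin K → ℕ) → ℝ)
    (hρ0 : ∀ a ∈ 𝒜, 0 ≤ ρ a) (hρ1 : ∑ a ∈ 𝒜, ρ a = 1)
    (wp wf : ℝ) (p : Fin M → Fin K → ℝ) (f : Fin M → ℝ)
    (hp0 : ∀ m k, 0 ≤ p m k) (hpmono : ∀ m, Monotone (p m))
    (V : QS M K N → ℝ)
    (hV : ∀ Q₁ Q₂ : QS M K N, TriState Q₂ Q₁ → V Q₁ ≤ V Q₂) :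
    ∀ (Q : QS M K N) (u v : Fin M), v ≠ u → ∀ (k : Fin K) (h : Q.1 u k < N u k),
      TriState (addE Q u k h) Q →
      JCost 𝒜 ρ wp wf p f V (addE Q u k h) u - JCost 𝒜 ρ wp wf p f V (addE Q u k h) v ≤
        JCost 𝒜 ρ wp wf p f V Q u - JCost 𝒜 ρ wp wf p f V Q v :=
  J_partial_monotone_general N 𝒜 ρ hρ0 wp wf p f hpmono V hV
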